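/- arXiv:2405.08730 — 3 statements merged into one kernel-verified Lean document; each statement's English description precedes it below -/
import Mathlib

section
/- For any integers N ≥ 2 and J ≥ 2, the matrix A of all two-by-two DID estimators has rank exactly (N−1)(J−1); equivalently, rank(Aᵀ) = rank(A) = (N−1)(J−1). -/
open Matrix

/-- Quadruples (i,i',j,j') with i < i' and j < j'. -/
abbrev Quad (N J : ℕ) :=
  {q : (Fin N × Fin N) × (Fin J × Fin J) // q.1.1 < q.1.2 ∧ q.2.1 < q.2.2}

/-- The matrix of all two-by-two DID estimators: the row indexed by (i,i',j,j')
has +1 in columns (i,j') and (i',j), −1 in columns (i,j) and (i',j'), 0 elsewhere. -/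
def Amat (N J : ℕ) : Matrix (Quad N J) (Fin N × Fin J) ℝ :=
  Matrix.of fun q p =>
    (if p = (q.val.1.1, q.val.2.2) then (1 : ℝ) else 0)
      + (if p = (q.val.1.2, q.val.2.1) then 1 else 0)
      - (if p = (q.val.1.1, q.val.2.1) then 1 else 0)
      - (if p = (q.val.1.2, q.val.2.2) then 1 else 0)

/-!
The DID estimators annihilate exactly the outcomes with additive unit and period effects,
`y (i, j) = a i + b j`: if every DID vanishes then `y (i, j) - y (i, 0) - y (0, j) + y (0, 0) = 0`.
They form the image of `(a, b) ↦ ((i, j) ↦ a i + b j)`, a map from an `N + J`-dimensional space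
whose kernel is the line through `(1, -1)`, hence a space of dimension `N + J - 1`.
Rank–nullity then gives `rank A = N J - (N + J - 1) = (N - 1)(J - 1)`.
-/

section TwoWayEffects

variable (K ι κ : Type*)

def twoWayEffects [Semiring K] : (ι → K) × (κ → K) →ₗ[K] (ι × κ → K) :=
  (LinearMap.funLeft K K Prod.fst).coprod (LinearMap.funLeft K K Prod.snd)

variable {K ι κ}

@[simp]
lemma twoWayEffects_apply [Semiring K] (ab : (ι → K) × (κ → K)) (p : ι × κ) :
    twoWayEffects K ι κ ab p = ab.1 p.1 + ab.2 p.2 :=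
  rfl

variable [Field K]

lemma ker_twoWayEffects [Nonempty ι] [Nonempty κ] :
    LinearMap.ker (twoWayEffects K ι κ) = K ∙ ((1, -1) : (ι → K) × (κ → K)) := by
  ext ⟨a, b⟩
  simp only [LinearMap.mem_ker, Submodule.mem_span_singleton]
  constructor
  · intro h
    have hab (i : ι) (j : κ) : a i + b j = 0 := by simpa using congrFun h (i, j)
    obtain ⟨i₀⟩ := ‹Nonempty ι›
    obtain ⟨j₀⟩ := ‹Nonempty κ›
    refine ⟨a i₀, Prod.ext (funext fun i => ?_) (funext fun j => ?_)⟩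
    · show a i₀ * 1 = a i
      linear_combination hab i₀ j₀ - hab i j₀
    · show a i₀ * -1 = b j
      linear_combination -hab i₀ j
  · rintro ⟨c, hc⟩
    rw [← hc]
    funext p
    simp

lemma finrank_range_twoWayEffects [Fintype ι] [Fintype κ] [Nonempty ι] [Nonempty κ] :
    Module.finrank K (LinearMap.range (twoWayEffects K ι κ)) =
      Fintype.card ι + Fintype.card κ - 1 := by
  have hker : Module.finrank K (LinearMap.ker (twoWayEffects K ι κ)) = 1 := by
    rw [ker_twoWayEffects, finrank_span_singleton]
    simp [Prod.ext_iff]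
  have := (twoWayEffects K ι κ).finrank_range_add_finrank_ker
  rw [hker, Module.finrank_prod, Module.finrank_fintype_fun_eq_card,
    Module.finrank_fintype_fun_eq_card] at this
  omega

end TwoWayEffects

lemma Amat_mulVec {N J : ℕ} (y : Fin N × Fin J → ℝ) (q : Quad N J) :
    (Amat N J *ᵥ y) q =
      y (q.val.1.1, q.val.2.2) + y (q.val.1.2, q.val.2.1)
        - y (q.val.1.1, q.val.2.1) - y (q.val.1.2, q.val.2.2) := by
  simp [Amat, mulVec, dotProduct, add_mul, sub_mul, ite_mul, Finset.sum_add_distrib,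
    Finset.sum_sub_distrib]

lemma ker_mulVecLin_Amat {N J : ℕ} [NeZero N] [NeZero J] :
    LinearMap.ker (Amat N J).mulVecLin = LinearMap.range (twoWayEffects ℝ (Fin N) (Fin J)) := by
  ext y
  simp only [LinearMap.mem_ker, mulVecLin_apply, LinearMap.mem_range]
  constructor
  · intro hy
    have hinteraction (i : Fin N) (j : Fin J) : y (i, j) + y (0, 0) = y (i, 0) + y (0, j) := by
      rcases eq_or_ne i 0 with rfl | hi
      · ring
      rcases eq_or_ne j 0 with rfl | hj
      · ring
      have := congrFun hy ⟨((0, i), (0, j)), Fin.pos_iff_ne_zero.2 hi, Fin.pos_iff_ne_zero.2 hj⟩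
      rw [Amat_mulVec, Pi.zero_apply] at this
      linarith
    refine ⟨(fun i => y (i, 0), fun j => y (0, j) - y (0, 0)), funext fun p => ?_⟩
    simp only [twoWayEffects_apply]
    linarith [hinteraction p.1 p.2]
  · rintro ⟨ab, rfl⟩
    funext q
    simp only [Amat_mulVec, twoWayEffects_apply, Pi.zero_apply]
    ring

lemma rank_Amat_add {N J : ℕ} [NeZero N] [NeZero J] :
    (Amat N J).rank + (N + J - 1) = N * J := by
  have := (Amat N J).mulVecLin.finrank_range_add_finrank_ker
  rwa [ker_mulVecLin_Amat, finrank_range_twoWayEffects, Module.finrank_fintype_fun_eq_card,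
    Fintype.card_prod, Fintype.card_fin, Fintype.card_fin] at this

/-- Lemma 2: For any N ≥ 2 and J ≥ 2, the matrix A of all two-by-two
DID estimators satisfies rank(Aᵀ) = rank(A) = (N−1)(J−1). -/
theorem rank_Amat
    (N J : ℕ) (hN : 2 ≤ N) (hJ : 2 ≤ J) :
    (Amat N J).rank = (N - 1) * (J - 1) ∧ ((Amat N J)ᵀ).rank = (N - 1) * (J - 1) := by
  obtain ⟨n, rfl⟩ : ∃ n, N = n + 1 := ⟨N - 1, by omega⟩
  obtain ⟨m, rfl⟩ : ∃ m, J = m + 1 := ⟨J - 1, by omega⟩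
  have hA : (Amat (n + 1) (m + 1)).rank = n * m := by
    have := rank_Amat_add (N := n + 1) (J := m + 1)
    rw [show n + 1 + (m + 1) - 1 = n + m + 1 by omega] at this
    linarith
  simpa [rank_transpose] using hA
end

section
/- A vector u ∈ ℝ^(N×J) can be realized as the observation-weight vector of some weighted combination of two-by-two DID estimators, i.e., u = Aᵀ w for some weight vector w on the quadruples, if and only if all of its unit-wise and period-wise sums vanish: Σ_{j=1}^{J} u(i,j) = 0 for every unit i and Σ_{i=1}^{N} u(i,j) = 0 for every period j. In particular, purely vertical comparisons (whose unit-wise sums are nonzero) cannot be constructed as weighted averages of two-by-two DID estimators. -/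
/-!
Over a field, `u` lies in the range of `Aᵀ` exactly when it is orthogonal to the kernel of `A`. A
vector `y` has all its two-by-two DID estimators zero exactly when it is a sum of a unit effect
and a period effect, `y (i, j) = a i + b j` (compare every cell with unit `0` and period `0`).
Pairing `u` with such a `y` gives `∑ i, a i * (row sum i) + ∑ j, b j * (column sum j)`, which
vanishes for all `a`, `b` iff all row and column sums vanish.
-/

open Matrix

theorem Matrix.exists_eq_transpose_mulVec_iff {K m n : Type*} [Field K] [Fintype m] [Fintype n]
    [DecidableEq m] [DecidableEq n] (A : Matrix m n K) (u : n → K) :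
    (∃ w, u = Aᵀ *ᵥ w) ↔ ∀ y, A *ᵥ y = 0 → u ⬝ᵥ y = 0 := by
  constructor
  · rintro ⟨w, rfl⟩ y hy
    rw [mulVec_transpose, ← dotProduct_mulVec, hy, dotProduct_zero]
  · intro h
    obtain ⟨φ, hφ⟩ : dotProductEquiv K n u ∈ LinearMap.range A.mulVecLin.dualMap := by
      rw [LinearMap.range_dualMap_eq_dualAnnihilator_ker]
      exact (Submodule.mem_dualAnnihilator _).2 fun y hy => h y hy
    refine ⟨(dotProductEquiv K m).symm φ, (dotProductEquiv K n).injective ?_⟩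
    refine LinearMap.ext fun y => ?_
    rw [← hφ, dotProductEquiv_apply_apply, mulVec_transpose, ← dotProduct_mulVec,
      ← dotProductEquiv_apply_apply, LinearEquiv.apply_symm_apply]
    rfl

theorem dotProduct_add_effects {R α β : Type*} [CommSemiring R] [Fintype α] [Fintype β]
    (u : α × β → R) (a : α → R) (b : β → R) :
    u ⬝ᵥ (fun p => a p.1 + b p.2) = ∑ i, a i * ∑ j, u (i, j) + ∑ j, b j * ∑ i, u (i, j) := by
  simp only [dotProduct, mul_add, Finset.sum_add_distrib, Fintype.sum_prod_type, Finset.mul_sum]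
  rw [Finset.sum_comm (f := fun i j => u (i, j) * b j)]
  simp only [mul_comm]

theorem forall_dotProduct_add_effects_eq_zero_iff {R α β : Type*} [CommSemiring R]
    [Fintype α] [Fintype β] [DecidableEq α] [DecidableEq β] (u : α × β → R) :
    (∀ (a : α → R) (b : β → R), u ⬝ᵥ (fun p => a p.1 + b p.2) = 0) ↔
      (∀ i, ∑ j, u (i, j) = 0) ∧ ∀ j, ∑ i, u (i, j) = 0 := by
  simp only [dotProduct_add_effects]
  refine ⟨fun h => ⟨fun i => ?_, fun j => ?_⟩, fun ⟨hrow, hcol⟩ a b => by simp [hrow, hcol]⟩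
  · simpa [Pi.single_apply] using h (Pi.single i 1) 0
  · simpa [Pi.single_apply] using h 0 (Pi.single j 1)

variable {N J : ℕ}

theorem Amat_mulVec_apply (y : Fin N × Fin J → ℝ) (q : Quad N J) :
    (Amat N J *ᵥ y) q = (y (q.1.1.1, q.1.2.2) - y (q.1.1.1, q.1.2.1))
      - (y (q.1.1.2, q.1.2.2) - y (q.1.1.2, q.1.2.1)) := by
  simp only [mulVec, dotProduct, Amat, of_apply, sub_mul, add_mul, ite_mul, one_mul, zero_mul,
    Finset.sum_sub_distrib, Finset.sum_add_distrib, Finset.sum_ite_eq', Finset.mem_univ, ↓reduceIte]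
  ring

theorem Amat_mulVec_eq_zero_iff [NeZero N] [NeZero J] (y : Fin N × Fin J → ℝ) :
    Amat N J *ᵥ y = 0 ↔ ∃ (a : Fin N → ℝ) (b : Fin J → ℝ), y = fun p => a p.1 + b p.2 := by
  constructor
  · intro hy
    refine ⟨fun i => y (i, 0) - y (0, 0), fun j => y (0, j), funext fun ⟨i, j⟩ => ?_⟩
    rcases eq_or_ne i 0 with rfl | hi
    · ring
    rcases eq_or_ne j 0 with rfl | hj
    · ring
    have := congrFun hy ⟨((0, i), (0, j)), Fin.pos_iff_ne_zero.2 hi, Fin.pos_iff_ne_zero.2 hj⟩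
    rw [Amat_mulVec_apply] at this
    simp only [Pi.zero_apply] at this
    linarith
  · rintro ⟨a, b, rfl⟩
    ext q
    rw [Amat_mulVec_apply]
    simp only [Pi.zero_apply]
    ring

/-- A vector u ∈ ℝ^(N×J) equals Aᵀ w for some weight vector w on the
quadruples if and only if all of its unit-wise and period-wise sums vanish. -/
theorem obs_weights_characterization
    (N J : ℕ) (hN : 2 ≤ N) (hJ : 2 ≤ J) (u : Fin N × Fin J → ℝ) :
    (∃ w : Quad N J → ℝ, u = (Amat N J)ᵀ.mulVec w)
      ↔ ((∀ i : Fin N, ∑ j : Fin J, u (i, j) = 0)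
          ∧ (∀ j : Fin J, ∑ i : Fin N, u (i, j) = 0)) := by
  have : NeZero N := ⟨by omega⟩
  have : NeZero J := ⟨by omega⟩
  rw [exists_eq_transpose_mulVec_iff, ← forall_dotProduct_add_effects_eq_zero_iff]
  constructor
  · exact fun h a b => h _ ((Amat_mulVec_eq_zero_iff _).2 ⟨a, b, rfl⟩)
  · intro h y hy
    obtain ⟨a, b, rfl⟩ := (Amat_mulVec_eq_zero_iff y).1 hy
    exact h a b
end

section
/- (Type 5: always-treated vs. switch.) Under consistency, no anticipation, no spillover at the level of means, staggered adoption, and parallel trends, if units i, i' and periods j, j' satisfy T(i) ≤ j < T(i') ≤ j', then the expected two-by-two DID satisfies E[D_{i,i',j,j'}] = θ(i,j') − θ(i,j) − θ(i',j'). -/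
theorem did_eq_of_parallel_trends {ι τ R : Type*} [CommRing R] {m0 θ X μ : ι → τ → R}
    (hμ : ∀ i j, μ i j = m0 i j + θ i j * X i j) {i i' : ι} {j j' : τ}
    (hPT : m0 i j' - m0 i j = m0 i' j' - m0 i' j) :
    (μ i j' - μ i j) - (μ i' j' - μ i' j) =
      (θ i j' * X i j' - θ i j * X i j) - (θ i' j' * X i' j' - θ i' j * X i' j) := by
  simp only [hμ]
  linear_combination hPT

theorem expn_did_type5_general
    (m0 θ X μ : ℕ → ℕ → ℝ) (T : ℕ → ℕ) (ED : ℕ → ℕ → ℕ → ℕ → ℝ)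
    (hX : ∀ i j, X i j = if T i ≤ j then 1 else 0)
    (hμ : ∀ i j, μ i j = m0 i j + θ i j * X i j)
    (hED : ∀ i i' j j', ED i i' j j' = (μ i j' - μ i j) - (μ i' j' - μ i' j))
    (hPT : ∀ i i' j j', m0 i j' - m0 i j = m0 i' j' - m0 i' j)
    (i i' j j' : ℕ)
    (h1 : T i ≤ j) (h2 : j < T i') (h3 : T i' ≤ j') :
    ED i i' j j' = θ i j' - θ i j - θ i' j' := by
  have hij' : T i ≤ j' := h1.trans (h2.trans_le h3).le
  rw [hED, did_eq_of_parallel_trends hμ (hPT i i' j j'), hX, hX, hX, hX,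
    if_pos hij', if_pos h1, if_pos h3, if_neg h2.not_ge]
  ring

/-- Type 5: always-treated vs. switch: under consistency, no anticipation, no spillover at the level of means, staggered adoption, and parallel trends, if T(i) ≤ j < T(i') ≤ j', then E[D_{i,i',j,j'}] = θ(i,j') − θ(i,j) − θ(i',j'). -/
theorem expn_did_type5
    (N J : ℕ) (hN : 1 ≤ N) (hJ : 1 ≤ J)
    (m0 m1 θ X μ : ℕ → ℕ → ℝ) (T : ℕ → ℕ) (ED : ℕ → ℕ → ℕ → ℕ → ℝ)
    (hθ : ∀ i j, θ i j = m1 i j - m0 i j)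
    (hT : ∀ i, 1 ≤ i → i ≤ N → 1 ≤ T i ∧ T i ≤ J + 1)
    (hX : ∀ i j, X i j = if T i ≤ j then 1 else 0)
    (hμ : ∀ i j, μ i j = m0 i j + θ i j * X i j)
    (hED : ∀ i i' j j', ED i i' j j' = (μ i j' - μ i j) - (μ i' j' - μ i' j))
    (hPT : ∀ i i' j j', m0 i j' - m0 i j = m0 i' j' - m0 i' j)
    (i i' j j' : ℕ)
    (hi : 1 ≤ i) (hiN : i ≤ N) (hi' : 1 ≤ i') (hi'N : i' ≤ N)
    (hj : 1 ≤ j) (hjJ : j ≤ J) (hj' : 1 ≤ j') (hj'J : j' ≤ J)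
    (h1 : T i ≤ j) (h2 : j < T i') (h3 : T i' ≤ j') :
    ED i i' j j' = θ i j' - θ i j - θ i' j' :=
  expn_did_type5_general m0 θ X μ T ED hX hμ hED hPT i i' j j' h1 h2 h3
end
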